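/- Let T' be a tree, let v be a vertex of T' with γ(T'; v) = γ(T'), and let T be the tree obtained from T' by adding a new path on two vertices u, w (with edge uw) together with the edge vu. Then γ(T) = γ(T') + 1 and γ_t2(T) ≤ γ_t2(T') + 1; in particular, if γ(T') = γ_t2(T'), then γ(T) = γ_t2(T). -/

import Mathlib

open SimpleGraph

/-- A dominating set: every vertex outside `S` has a neighbor in `S`. -/
def IsDominatingSet {V : Type} (G : SimpleGraph V) (S : Set V) : Prop :=
  ∀ v ∉ S, ∃ u ∈ S, G.Adj u v

/-- A total dominating set: every vertex has a neighbor in `S`. -/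
def IsTotalDominatingSet {V : Type} (G : SimpleGraph V) (S : Set V) : Prop :=
  ∀ v : V, ∃ u ∈ S, G.Adj u v

/-- `u` is within distance two of `v`. -/
def WithinTwo {V : Type} (G : SimpleGraph V) (u v : V) : Prop :=
  G.Adj u v ∨ ∃ w, G.Adj u w ∧ G.Adj w v

/-- A semitotal dominating set: a dominating set in which every vertex is within
distance two of another vertex of the set. -/
def IsSemitotalDominatingSet {V : Type} (G : SimpleGraph V) (S : Set V) : Prop :=
  IsDominatingSet G S ∧ ∀ v ∈ S, ∃ u ∈ S, u ≠ v ∧ WithinTwo G u v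

/-- The domination number `γ(G)`. -/
noncomputable def dominationNumber {V : Type} (G : SimpleGraph V) : ℕ :=
  sInf {n | ∃ S : Set V, IsDominatingSet G S ∧ S.ncard = n}

/-- The total domination number `γ_t(G)`. -/
noncomputable def totalDominationNumber {V : Type} (G : SimpleGraph V) : ℕ :=
  sInf {n | ∃ S : Set V, IsTotalDominatingSet G S ∧ S.ncard = n}

/-- The semitotal domination number `γ_t2(G)`. -/
noncomputable def semitotalDominationNumber {V : Type} (G : SimpleGraph V) : ℕ :=
  sInf {n | ∃ S : Set V, IsSemitotalDominatingSet G S ∧ S.ncard = n}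

/-- A leaf: a vertex of degree one. -/
def IsLeaf {V : Type} (G : SimpleGraph V) (v : V) : Prop :=
  (G.neighborSet v).ncard = 1

/-- A support vertex: a vertex adjacent to a leaf. -/
def IsSupport {V : Type} (G : SimpleGraph V) (v : V) : Prop :=
  ∃ u, G.Adj v u ∧ IsLeaf G u

/-- A star: a graph isomorphic to `K_{1,m}` for some `m ≥ 1`. -/
def IsStar {V : Type} (G : SimpleGraph V) : Prop :=
  ∃ m : ℕ, 1 ≤ m ∧ Nonempty (G ≃g completeBipartiteGraph Unit (Fin m))

/-- The graph obtained from the disjoint union of `G` and `H` by adding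
the single edge joining `v : V` to `w : W`. -/
def attach {V W : Type} (G : SimpleGraph V) (H : SimpleGraph W) (v : V) (w : W) :
    SimpleGraph (V ⊕ W) where
  Adj x y :=
    match x, y with
    | Sum.inl a, Sum.inl b => G.Adj a b
    | Sum.inr a, Sum.inr b => H.Adj a b
    | Sum.inl a, Sum.inr b => a = v ∧ b = w
    | Sum.inr a, Sum.inl b => b = v ∧ a = w
  symm := by
    constructor
    rintro (a | a) (b | b) h
    · exact G.adj_symm h
    · exact ⟨h.1, h.2⟩
    · exact ⟨h.1, h.2⟩
    · exact H.adj_symm h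
  loopless := by
    constructor
    rintro (a | a) h
    · exact G.irrefl h
    · exact H.irrefl h

/-- The statuses used to label the vertices of trees in the family `𝒯`. -/
inductive Label : Type
  | A | B | C
deriving DecidableEq

/-- The labeling of the path `P₅` assigning `A` to the two support vertices,
`C` to the two leaves and `B` to the center. -/
def pathLabel : Fin 5 → Label
  | 0 => Label.C
  | 1 => Label.A
  | 2 => Label.B
  | 3 => Label.A
  | 4 => Label.C

/-- The family `𝒯` of labeled trees: it contains the labeled path `P₅`, and is closed
under operation `𝒪₁` (attach a new leaf labeled `C` to a vertex labeled `A`), operation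
`𝒪₂` (attach a labeled path `P₅` to a degree-one vertex labeled `C`), and under
isomorphism of labeled graphs. -/
inductive TFamily : ∀ {V : Type}, SimpleGraph V → (V → Label) → Prop
  | base : TFamily (SimpleGraph.pathGraph 5) pathLabel
  | op1 {V : Type} {G : SimpleGraph V} {f : V → Label} (v : V)
      (hv : f v = Label.A) (h : TFamily G f) :
      TFamily (attach G (⊥ : SimpleGraph (Fin 1)) v 0)
        (Sum.elim f (fun _ => Label.C))
  | op2 {V : Type} {G : SimpleGraph V} {f : V → Label} (v : V)
      (hv : f v = Label.C) (hdeg : (G.neighborSet v).ncard = 1) (h : TFamily G f) :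
      TFamily (attach G (SimpleGraph.pathGraph 5) v 0) (Sum.elim f pathLabel)
  | iso {V W : Type} {G : SimpleGraph V} {H : SimpleGraph W} {f : V → Label}
      (e : G ≃g H) (h : TFamily G f) : TFamily H (fun w => f (e.symm w))

/-- The subdivided star with `t` leaves: center `none`, and for each `i : Fin t`
a path `none — some (i,0) — some (i,1)`. -/
def subdividedStar (t : ℕ) : SimpleGraph (Option (Fin t × Fin 2)) :=
  SimpleGraph.fromRel (fun x y =>
    match x, y with
    | none, some p => p.2 = 0
    | some p, some q => p.1 = q.1 ∧ p.2 = 0 ∧ q.2 = 1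
    | _, _ => False)

/-- The tree `Y` with three leaves, obtained from the star `K_{1,3}` with center `0`
by subdividing exactly one edge: edges `0-1`, `0-2`, `0-3`, `3-4`.  Its leaves are
`1`, `2`, `4`; the leaf-neighbors of the center are `1` and `2`. -/
def Ytree : SimpleGraph (Fin 5) :=
  SimpleGraph.fromRel (fun x y =>
    (x = 0 ∧ y = 1) ∨ (x = 0 ∧ y = 2) ∨ (x = 0 ∧ y = 3) ∨ (x = 3 ∧ y = 4))

/-- An almost dominating set of `G` relative to `v`: dominates every vertex except
possibly `v`. -/
def IsAlmostDominatingSet {V : Type} (G : SimpleGraph V) (v : V) (S : Set V) : Prop :=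
  ∀ w, w ≠ v → w ∉ S → ∃ u ∈ S, G.Adj u w

/-- The almost domination number `γ(G; v)`. -/
noncomputable def almostDominationNumber {V : Type} (G : SimpleGraph V) (v : V) : ℕ :=
  sInf {n | ∃ S : Set V, IsAlmostDominatingSet G v S ∧ S.ncard = n}

/-- The family `𝒪` of trees: all trees obtainable from the path `P₄` by a finite
sequence of the operations `𝒪₁`–`𝒪₄` (and taking isomorphic copies). -/
inductive OFamily : ∀ {V : Type}, SimpleGraph V → Prop
  | base : OFamily (SimpleGraph.pathGraph 4)
  | op1 {V : Type} {G : SimpleGraph V} (v : V)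
      (hv : ∃ S : Set V, IsSemitotalDominatingSet G S ∧
        S.ncard = semitotalDominationNumber G ∧ v ∈ S)
      (h : OFamily G) :
      OFamily (attach G (⊥ : SimpleGraph (Fin 1)) v 0)
  | op2short {V : Type} {G : SimpleGraph V} (v : V)
      (hv : almostDominationNumber G v = dominationNumber G) (h : OFamily G) :
      OFamily (attach G (SimpleGraph.pathGraph 2) v 0)
  | op2long {V : Type} {G : SimpleGraph V} (v : V)
      (hv : almostDominationNumber G v = dominationNumber G) (h : OFamily G) :
      OFamily (attach G (SimpleGraph.pathGraph 5) v 0)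
  | op3 {V : Type} {G : SimpleGraph V} (v : V) (t : ℕ) (ht : 2 ≤ t) (h : OFamily G) :
      OFamily (attach G (subdividedStar t) v none)
  | op4 {V : Type} {G : SimpleGraph V} (v : V) (h : OFamily G) :
      OFamily (attach G Ytree v 1)
  | iso {V W : Type} {G : SimpleGraph V} {H : SimpleGraph W}
      (e : G ≃g H) (h : OFamily G) : OFamily H

/-! A minimum dominating set of `T'` together with the new neighbour `u` of `v` dominates `T`, and
the same lift of a semitotal dominating set stays semitotal: `u` is adjacent to `v`, or within
distance two of any neighbour of `v` in the set. Conversely, a dominating set of `T` must contain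
`u` or the new leaf in order to dominate the leaf, and its trace on `T'` dominates every vertex of
`T'` except possibly `v`; hence `γ(T) ≥ γ(T'; v) + 1 = γ(T') + 1`. The last claim then follows
from `γ ≤ γ_t2`. -/

namespace Set

theorem ncard_image_inl_union_image_inr {α β : Type*} [Finite α] [Finite β] (s : Set α)
    (t : Set β) : (Sum.inl '' s ∪ Sum.inr '' t).ncard = s.ncard + t.ncard := by
  rw [ncard_union_eq disjoint_image_inl_image_inr, ncard_image_of_injective _ Sum.inl_injective,
    ncard_image_of_injective _ Sum.inr_injective]

theorem ncard_eq_ncard_preimage_inl_add_ncard_preimage_inr {α β : Type*} [Finite α] [Finite β]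
    (s : Set (α ⊕ β)) : s.ncard = (Sum.inl ⁻¹' s).ncard + (Sum.inr ⁻¹' s).ncard := by
  conv_lhs => rw [← image_preimage_inl_union_image_preimage_inr s]
  exact ncard_image_inl_union_image_inr _ _

end Set

section Domination

variable {V : Type} {G : SimpleGraph V} {S : Set V}

theorem exists_isDominatingSet_ncard_eq_dominationNumber (G : SimpleGraph V) :
    ∃ S, IsDominatingSet G S ∧ S.ncard = dominationNumber G :=
  Nat.sInf_mem (s := {n | ∃ S, IsDominatingSet G S ∧ S.ncard = n})
    ⟨_, Set.univ, fun x hx => absurd (Set.mem_univ x) hx, rfl⟩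

theorem dominationNumber_le_ncard (hS : IsDominatingSet G S) : dominationNumber G ≤ S.ncard :=
  Nat.sInf_le ⟨S, hS, rfl⟩

theorem almostDominationNumber_le_ncard {v : V} (hS : IsAlmostDominatingSet G v S) :
    almostDominationNumber G v ≤ S.ncard :=
  Nat.sInf_le ⟨S, hS, rfl⟩

theorem semitotalDominationNumber_le_ncard (hS : IsSemitotalDominatingSet G S) :
    semitotalDominationNumber G ≤ S.ncard :=
  Nat.sInf_le ⟨S, hS, rfl⟩

theorem exists_isSemitotalDominatingSet_ncard_eq_semitotalDominationNumber
    (h : ∃ S, IsSemitotalDominatingSet G S) :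
    ∃ S, IsSemitotalDominatingSet G S ∧ S.ncard = semitotalDominationNumber G := by
  obtain ⟨S, hS⟩ := h
  exact Nat.sInf_mem (s := {n | ∃ S, IsSemitotalDominatingSet G S ∧ S.ncard = n})
    ⟨_, S, hS, rfl⟩

theorem isSemitotalDominatingSet_univ (h : ∀ x, ∃ y, G.Adj x y) :
    IsSemitotalDominatingSet G Set.univ := by
  refine ⟨fun x hx => absurd (Set.mem_univ x) hx, fun x _ => ?_⟩
  obtain ⟨y, hxy⟩ := h x
  exact ⟨y, Set.mem_univ y, hxy.ne', Or.inl hxy.symm⟩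

theorem dominationNumber_le_semitotalDominationNumber (h : ∃ S, IsSemitotalDominatingSet G S) :
    dominationNumber G ≤ semitotalDominationNumber G := by
  obtain ⟨S, hS, hcard⟩ := exists_isSemitotalDominatingSet_ncard_eq_semitotalDominationNumber h
  exact hcard ▸ dominationNumber_le_ncard hS.1

theorem dominationNumber_pos [Finite V] [Nonempty V] (G : SimpleGraph V) :
    0 < dominationNumber G := by
  obtain ⟨S, hS, hcard⟩ := exists_isDominatingSet_ncard_eq_dominationNumber G
  obtain ⟨x⟩ := ‹Nonempty V›
  refine Nat.pos_of_ne_zero fun h0 => ?_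
  rw [← hcard, Set.ncard_eq_zero] at h0
  subst h0
  obtain ⟨u, hu, -⟩ := hS x (Set.notMem_empty x)
  exact hu

theorem almostDominationNumber_eq_zero [Subsingleton V] (v : V) :
    almostDominationNumber G v = 0 :=
  Nat.eq_zero_of_le_zero <| Set.ncard_empty V ▸
    almostDominationNumber_le_ncard fun w hw _ => absurd (Subsingleton.elim w v) hw

theorem nontrivial_of_almostDominationNumber_eq_dominationNumber [Finite V] {v : V}
    (h : almostDominationNumber G v = dominationNumber G) : Nontrivial V := by
  have : Nonempty V := ⟨v⟩
  by_contra hV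
  have : Subsingleton V := not_nontrivial_iff_subsingleton.mp hV
  have := dominationNumber_pos G
  rw [← h, almostDominationNumber_eq_zero] at this
  exact this.false

end Domination

section Attach

variable {V W : Type} {G : SimpleGraph V} {H : SimpleGraph W} {v : V} {w : W}

theorem isDominatingSet_attach {S : Set V} {D : Set W} (hS : IsDominatingSet G S)
    (hD : IsDominatingSet H D) :
    IsDominatingSet (attach G H v w) (Sum.inl '' S ∪ Sum.inr '' D) := by
  rintro (x | x) hx
  · obtain ⟨u, hu, hux⟩ := hS x fun h => hx (Or.inl ⟨x, h, rfl⟩)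
    exact ⟨Sum.inl u, Or.inl ⟨u, hu, rfl⟩, hux⟩
  · obtain ⟨u, hu, hux⟩ := hD x fun h => hx (Or.inr ⟨x, h, rfl⟩)
    exact ⟨Sum.inr u, Or.inr ⟨u, hu, rfl⟩, hux⟩

theorem isSemitotalDominatingSet_attach {S : Set V} (hS : IsSemitotalDominatingSet G S)
    (hw : IsDominatingSet H {w}) :
    IsSemitotalDominatingSet (attach G H v w) (Sum.inl '' S ∪ Sum.inr '' {w}) := by
  refine ⟨isDominatingSet_attach hS.1 hw, ?_⟩
  rintro _ (⟨x, hx, rfl⟩ | ⟨_, rfl, rfl⟩)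
  · obtain ⟨u, hu, hux, hwithin⟩ := hS.2 x hx
    refine ⟨Sum.inl u, Or.inl ⟨u, hu, rfl⟩, fun h => hux (Sum.inl_injective h), ?_⟩
    rcases hwithin with h | ⟨y, huy, hyx⟩
    · exact Or.inl h
    · exact Or.inr ⟨Sum.inl y, huy, hyx⟩
  · by_cases hv : v ∈ S
    · exact ⟨Sum.inl v, Or.inl ⟨v, hv, rfl⟩, Sum.inl_ne_inr, Or.inl ⟨rfl, rfl⟩⟩
    · obtain ⟨u, hu, huv⟩ := hS.1 v hv
      exact ⟨Sum.inl u, Or.inl ⟨u, hu, rfl⟩, Sum.inl_ne_inr,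
        Or.inr ⟨Sum.inl v, huv, rfl, rfl⟩⟩

theorem IsDominatingSet.isAlmostDominatingSet_preimage_inl {D : Set (V ⊕ W)}
    (hD : IsDominatingSet (attach G H v w) D) : IsAlmostDominatingSet G v (Sum.inl ⁻¹' D) := by
  intro x hxv hx
  obtain ⟨u | u, hu, hux⟩ := hD (Sum.inl x) hx
  · exact ⟨u, hu, hux⟩
  · exact absurd hux.1 hxv

theorem IsDominatingSet.preimage_inr_nonempty {D : Set (V ⊕ W)}
    (hD : IsDominatingSet (attach G H v w) D) {x : W} (hx : x ≠ w) :
    (Sum.inr ⁻¹' D).Nonempty := by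
  by_contra hempty
  obtain ⟨u | u, hu, hux⟩ := hD (Sum.inr x) fun h => hempty ⟨x, h⟩
  · exact hx hux.2
  · exact hempty ⟨u, hu⟩

theorem almostDominationNumber_add_one_le_dominationNumber_attach [Finite V] [Finite W]
    {x : W} (hx : x ≠ w) :
    almostDominationNumber G v + 1 ≤ dominationNumber (attach G H v w) := by
  obtain ⟨D, hD, hcard⟩ := exists_isDominatingSet_ncard_eq_dominationNumber (attach G H v w)
  have htrace := almostDominationNumber_le_ncard hD.isAlmostDominatingSet_preimage_inl
  have hnew := (Set.ncard_pos).mpr (hD.preimage_inr_nonempty hx)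
  rw [← hcard, Set.ncard_eq_ncard_preimage_inl_add_ncard_preimage_inr D]
  omega

theorem dominationNumber_attach_le [Finite V] [Finite W] :
    dominationNumber (attach G H v w) ≤ dominationNumber G + dominationNumber H := by
  obtain ⟨S, hS, hS_card⟩ := exists_isDominatingSet_ncard_eq_dominationNumber G
  obtain ⟨D, hD, hD_card⟩ := exists_isDominatingSet_ncard_eq_dominationNumber H
  rw [← hS_card, ← hD_card, ← Set.ncard_image_inl_union_image_inr]
  exact dominationNumber_le_ncard (isDominatingSet_attach hS hD)

theorem semitotalDominationNumber_attach_le [Finite V] [Finite W]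
    (hG : ∃ S, IsSemitotalDominatingSet G S) (hw : IsDominatingSet H {w}) :
    semitotalDominationNumber (attach G H v w) ≤ semitotalDominationNumber G + 1 := by
  obtain ⟨S, hS, hS_card⟩ :=
    exists_isSemitotalDominatingSet_ncard_eq_semitotalDominationNumber hG
  rw [← hS_card, ← Set.ncard_singleton w, ← Set.ncard_image_inl_union_image_inr]
  exact semitotalDominationNumber_le_ncard (isSemitotalDominatingSet_attach hS hw)

end Attach

theorem isDominatingSet_pathGraph_two_zero : IsDominatingSet (pathGraph 2) {0} := by
  intro x hx
  exact ⟨0, rfl, by fin_cases x <;> simp_all [pathGraph_adj]⟩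

/-- Attaching a path on two new vertices to a vertex `v` of a tree `T'`
with `γ(T'; v) = γ(T')` gives a tree `T` with `γ(T) = γ(T') + 1` and
`γ_t2(T) ≤ γ_t2(T') + 1`; in particular `γ(T') = γ_t2(T')` implies `γ(T) = γ_t2(T)`. -/
theorem attach_path2_domination {V : Type} [Fintype V] (T' : SimpleGraph V)
    (hT' : T'.IsTree) (v : V)
    (hv : almostDominationNumber T' v = dominationNumber T') :
    dominationNumber (attach T' (SimpleGraph.pathGraph 2) v 0) = dominationNumber T' + 1 ∧
      semitotalDominationNumber (attach T' (SimpleGraph.pathGraph 2) v 0) ≤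
        semitotalDominationNumber T' + 1 ∧
      (dominationNumber T' = semitotalDominationNumber T' →
        dominationNumber (attach T' (SimpleGraph.pathGraph 2) v 0) =
          semitotalDominationNumber (attach T' (SimpleGraph.pathGraph 2) v 0)) := by
  have hP₂ := isDominatingSet_pathGraph_two_zero
  have : Nontrivial V := nontrivial_of_almostDominationNumber_eq_dominationNumber hv
  obtain ⟨S, hS⟩ : ∃ S, IsSemitotalDominatingSet T' S :=
    ⟨_, isSemitotalDominatingSet_univ hT'.connected.preconnected.exists_adj_of_nontrivial⟩
  have hlower := almostDominationNumber_add_one_le_dominationNumber_attach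
    (G := T') (H := pathGraph 2) (v := v) (w := 0) (x := 1) (by decide)
  have hupper :=
    dominationNumber_attach_le (G := T') (H := pathGraph 2) (v := v) (w := (0 : Fin 2))
  have hγP₂ : dominationNumber (pathGraph 2) ≤ 1 :=
    Set.ncard_singleton (0 : Fin 2) ▸ dominationNumber_le_ncard hP₂
  have hγt2 := semitotalDominationNumber_attach_le (v := v) ⟨S, hS⟩ hP₂
  have hγ_le_γt2 := dominationNumber_le_semitotalDominationNumber
    ⟨_, isSemitotalDominatingSet_attach (v := v) hS hP₂⟩
  refine ⟨by omega, hγt2, fun h => by omega⟩
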